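/- Let τ : ℂ[x, y₁₃, y₁₄, y₁₅, y₁₆] → ℂ[x, w₃, w₂, ŵ₂] be the ℂ-algebra homomorphism with x ↦ x, y₁₃ ↦ w₃w₂²ŵ₂³, y₁₄ ↦ w₃²w₂⁴, y₁₅ ↦ w₃³ŵ₂³, y₁₆ ↦ w₃⁴w₂². Then τ(f₁₂,ₐ) lies in the ideal of ℂ[x, w₃, w₂, ŵ₂] generated by w₃⁶ − k₃(x), w₂⁶ − k₂(x) and ŵ₂⁶ − k̂₂(x), for every a = 1, …, 9; consequently τ induces a ring homomorphism R₁₂ = ℂ[x,y₁₃,y₁₄,y₁₅,y₁₆]/𝒫 → R̂₁₂ = ℂ[x, w₃, w₂, ŵ₂]/(w₃⁶ − k₃(x), w₂⁶ − k₂(x), ŵ₂⁶ − k̂₂(x)). -/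

import Mathlib

/-! In `R̂₁₂` the polynomials `k₃, k₂, k̂₂` are the sixth powers `w₃⁶, w₂⁶, ŵ₂⁶`. After this
substitution the two terms of each `τ(f₁₂,ₐ)` are the same monomial in `w₃, w₂, ŵ₂`, so every
`τ(f₁₂,ₐ)` vanishes in `R̂₁₂`, i.e. `𝒫 ⊆ τ⁻¹(J)`, and `τ` descends to the quotients. -/

open MvPolynomial

/-- `k₃(x)` in `ℂ[x,y₁₃,y₁₄,y₁₅,y₁₆]` (variables `X 0 = x`, `X 1 = y₁₃`, `X 2 = y₁₄`,
`X 3 = y₁₅`, `X 4 = y₁₆`). -/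
noncomputable def k3X12 (b : Fin 7 → ℂ) : MvPolynomial (Fin 5) ℂ :=
  (X 0 - C (b 0)) * (X 0 - C (b 1)) * (X 0 - C (b 2))

/-- `k₂(x)` in `ℂ[x,y₁₃,y₁₄,y₁₅,y₁₆]`. -/
noncomputable def k2X12 (b : Fin 7 → ℂ) : MvPolynomial (Fin 5) ℂ :=
  (X 0 - C (b 3)) * (X 0 - C (b 4))

/-- `k̂₂(x)` in `ℂ[x,y₁₃,y₁₄,y₁₅,y₁₆]`. -/
noncomputable def hk2X12 (b : Fin 7 → ℂ) : MvPolynomial (Fin 5) ℂ :=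
  (X 0 - C (b 5)) * (X 0 - C (b 6))

/-- The nine defining polynomials `f₁₂,₁, …, f₁₂,₉` of the `(6,13,14,15,16)` curve. -/
noncomputable def fX12 (b : Fin 7 → ℂ) : Fin 9 → MvPolynomial (Fin 5) ℂ :=
  ![(X 1) ^ 2 - hk2X12 b * X 2,
    X 1 * X 2 - k2X12 b * X 3,
    hk2X12 b * (X 2) ^ 2 - k2X12 b * (X 1 * X 3),
    (X 2) ^ 2 - k2X12 b * X 4,
    X 1 * X 4 - X 2 * X 3,
    (X 3) ^ 2 - hk2X12 b * k3X12 b,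
    X 2 * X 4 - k2X12 b * k3X12 b,
    X 3 * X 4 - k3X12 b * X 1,
    (X 4) ^ 2 - k3X12 b * X 2]

/-- The ideal `𝒫 = (f₁₂,₁, …, f₁₂,₉)`. -/
noncomputable def PX12 (b : Fin 7 → ℂ) : Ideal (MvPolynomial (Fin 5) ℂ) :=
  Ideal.span (Set.range (fX12 b))

/-- `k₃(x)` in `ℂ[x,w₃,w₂,ŵ₂]` (variables `X 0 = x`, `X 1 = w₃`, `X 2 = w₂`, `X 3 = ŵ₂`). -/
noncomputable def k3W (b : Fin 7 → ℂ) : MvPolynomial (Fin 4) ℂ :=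
  (X 0 - C (b 0)) * (X 0 - C (b 1)) * (X 0 - C (b 2))

/-- `k₂(x)` in `ℂ[x,w₃,w₂,ŵ₂]`. -/
noncomputable def k2W (b : Fin 7 → ℂ) : MvPolynomial (Fin 4) ℂ :=
  (X 0 - C (b 3)) * (X 0 - C (b 4))

/-- `k̂₂(x)` in `ℂ[x,w₃,w₂,ŵ₂]`. -/
noncomputable def hk2W (b : Fin 7 → ℂ) : MvPolynomial (Fin 4) ℂ :=
  (X 0 - C (b 5)) * (X 0 - C (b 6))

/-- The ideal `(w₃⁶ − k₃(x), w₂⁶ − k₂(x), ŵ₂⁶ − k̂₂(x))` of `ℂ[x,w₃,w₂,ŵ₂]`. -/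
noncomputable def JW12 (b : Fin 7 → ℂ) : Ideal (MvPolynomial (Fin 4) ℂ) :=
  Ideal.span {(X 1) ^ 6 - k3W b, (X 2) ^ 6 - k2W b, (X 3) ^ 6 - hk2W b}

/-- `τ : ℂ[x,y₁₃,y₁₄,y₁₅,y₁₆] → ℂ[x,w₃,w₂,ŵ₂]`, `x ↦ x`, `y₁₃ ↦ w₃w₂²ŵ₂³`,
`y₁₄ ↦ w₃²w₂⁴`, `y₁₅ ↦ w₃³ŵ₂³`, `y₁₆ ↦ w₃⁴w₂²`. -/
noncomputable def tauX12 : MvPolynomial (Fin 5) ℂ →ₐ[ℂ] MvPolynomial (Fin 4) ℂ :=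
  MvPolynomial.aeval ![X 0,
    X 1 * (X 2) ^ 2 * (X 3) ^ 3,
    (X 1) ^ 2 * (X 2) ^ 4,
    (X 1) ^ 3 * (X 3) ^ 3,
    (X 1) ^ 4 * (X 2) ^ 2]

section
variable (b : Fin 7 → ℂ)

theorem tauX12_k3X12 : tauX12 (k3X12 b) = k3W b := by
  simp [tauX12, k3X12, k3W]

theorem tauX12_k2X12 : tauX12 (k2X12 b) = k2W b := by
  simp [tauX12, k2X12, k2W]

theorem tauX12_hk2X12 : tauX12 (hk2X12 b) = hk2W b := by
  simp [tauX12, hk2X12, hk2W]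

theorem mk_JW12_k3W :
    Ideal.Quotient.mk (JW12 b) (k3W b) = Ideal.Quotient.mk (JW12 b) (X 1) ^ 6 := by
  rw [← map_pow, eq_comm, Ideal.Quotient.eq]
  exact Ideal.subset_span (by simp)

theorem mk_JW12_k2W :
    Ideal.Quotient.mk (JW12 b) (k2W b) = Ideal.Quotient.mk (JW12 b) (X 2) ^ 6 := by
  rw [← map_pow, eq_comm, Ideal.Quotient.eq]
  exact Ideal.subset_span (by simp)

theorem mk_JW12_hk2W :
    Ideal.Quotient.mk (JW12 b) (hk2W b) = Ideal.Quotient.mk (JW12 b) (X 3) ^ 6 := by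
  rw [← map_pow, eq_comm, Ideal.Quotient.eq]
  exact Ideal.subset_span (by simp)

theorem tauX12_fX12_mem_JW12 (a : Fin 9) : tauX12 (fX12 b a) ∈ JW12 b := by
  rw [← Ideal.Quotient.eq_zero_iff_mem]
  fin_cases a <;>
    simp only [fX12, Fin.reduceFinMk, Matrix.cons_val, map_sub, map_mul, map_pow,
      tauX12_k3X12, tauX12_k2X12, tauX12_hk2X12, mk_JW12_k3W, mk_JW12_k2W, mk_JW12_hk2W] <;>
    simp only [tauX12, aeval_X, Matrix.cons_val, map_mul, map_pow] <;>
    ring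

theorem PX12_le_comap_tauX12 : PX12 b ≤ (JW12 b).comap tauX12 :=
  Ideal.span_le.2 <| Set.range_subset_iff.2 (tauX12_fX12_mem_JW12 b)

end

/-- `τ(f₁₂,ₐ)` lies in `(w₃⁶ − k₃(x), w₂⁶ − k₂(x), ŵ₂⁶ − k̂₂(x))` for every `a`; consequently
`τ` induces a ring homomorphism `R₁₂ = ℂ[x,y₁₃,y₁₄,y₁₅,y₁₆]/𝒫 → R̂₁₂`. -/
theorem tau_maps_X12_relations (b : Fin 7 → ℂ) :
    (∀ a : Fin 9, tauX12 (fX12 b a) ∈ JW12 b) ∧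
    ∃ g : (MvPolynomial (Fin 5) ℂ ⧸ PX12 b) →+* (MvPolynomial (Fin 4) ℂ ⧸ JW12 b),
      ∀ f : MvPolynomial (Fin 5) ℂ,
        g (Ideal.Quotient.mk (PX12 b) f) = Ideal.Quotient.mk (JW12 b) (tauX12 f) :=
  ⟨tauX12_fX12_mem_JW12 b, Ideal.quotientMapₐ _ tauX12 (PX12_le_comap_tauX12 b), fun _ => rfl⟩
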